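/- If K ⊆ ℝ^N is a closed convex set containing no line and with dim K ≥ 1, then there exists an affine hyperplane H ⊆ ℝ^N such that H ∩ K is compact and dim(H ∩ K) = dim K − 1. -/

import Mathlib

/-!
The recession (asymptotic) cone `C` of `K` is a closed convex cone, and it is salient because `K`
contains no line. Separating `0` from the compact convex hull of the unit vectors of `C` gives a
functional `f` that is positive on `C \ {0}`. A level set `{f = c}` then meets `K` in a closed set
whose recession cone `C ∩ ker f` is trivial, hence in a compact set. Taking `c = f z` for a point
`z` in the relative interior of `K`, the section spans `ker f ∩ vectorSpan ℝ K`, of codimension one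
in `vectorSpan ℝ K` as soon as `f` does not vanish there; this holds automatically when `C ≠ {0}`,
and when `C = {0}` any `f` will do.
-/

open Set Topology

/-- A set `S` contains a line if it contains `{x + t • v : t ∈ ℝ}` for some `x` and some
nonzero vector `v`. -/
def ContainsLine {N : ℕ} (S : Set (EuclideanSpace ℝ (Fin N))) : Prop :=
  ∃ x v : EuclideanSpace ℝ (Fin N), v ≠ 0 ∧ ∀ t : ℝ, x + t • v ∈ S

section ConvexHull

variable {E : Type*} [NormedAddCommGroup E] [NormedSpace ℝ E] [FiniteDimensional ℝ E]

/-- Carathéodory's theorem bounds the number of points needed by `finrank ℝ E + 1`. -/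
theorem convexHull_eq_biUnion_image_stdSimplex (s : Set E) :
    convexHull ℝ s = ⋃ k ∈ Finset.range (Module.finrank ℝ E + 2),
      (fun p : (Fin k → ℝ) × (Fin k → E) => ∑ i, p.1 i • p.2 i) ''
        (stdSimplex ℝ (Fin k) ×ˢ univ.pi fun _ => s) := by
  refine Subset.antisymm (fun x hx => ?_) (iUnion₂_subset fun k _ => ?_)
  · obtain ⟨ι, _, z, w, hzs, hind, hw0, hw1, rfl⟩ := eq_pos_convex_span_of_mem_convexHull hx
    have hcard : Fintype.card ι < Module.finrank ℝ E + 2 :=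
      hind.card_le_finrank_succ.trans_lt <| by
        have := Submodule.finrank_le (vectorSpan ℝ (range z))
        omega
    let e := (Fintype.equivFin ι).symm
    refine mem_biUnion (Finset.mem_range.2 hcard) ⟨(w ∘ e, z ∘ e), ⟨⟨fun i => (hw0 _).le, ?_⟩,
      fun i _ => hzs (mem_range_self _)⟩, e.sum_comp fun i => w i • z i⟩
    simpa only [Function.comp_apply] using (e.sum_comp w).trans hw1
  · rintro _ ⟨⟨w, z⟩, ⟨⟨hw0, hw1⟩, hz⟩, rfl⟩
    exact (convex_convexHull ℝ s).sum_mem (fun i _ => hw0 i) hw1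
      fun i _ => subset_convexHull ℝ s (hz i (mem_univ i))

theorem IsCompact.convexHull {s : Set E} (hs : IsCompact s) : IsCompact (convexHull ℝ s) := by
  rw [convexHull_eq_biUnion_image_stdSimplex]
  exact (Finset.range _).isCompact_biUnion fun k _ =>
    ((isCompact_stdSimplex ℝ (Fin k)).prod (isCompact_univ_pi fun _ => hs)).image (by fun_prop)

end ConvexHull

section SalientCone

variable {E : Type*} [NormedAddCommGroup E] [NormedSpace ℝ E] {C : Set E}

theorem zero_notMem_convexHull_of_salient (hzero : (0 : E) ∈ C)
    (hadd : ∀ v ∈ C, ∀ w ∈ C, v + w ∈ C) (hsmul : ∀ c : ℝ, 0 ≤ c → ∀ v ∈ C, c • v ∈ C)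
    (hsal : ∀ v ∈ C, -v ∈ C → v = 0) {B : Set E} (hBC : B ⊆ C) (hB0 : (0 : E) ∉ B) :
    (0 : E) ∉ convexHull ℝ B := by
  classical
  intro h
  obtain ⟨ι, _, z, w, hzB, -, hw0, hw1, hsum⟩ := eq_pos_convex_span_of_mem_convexHull h
  have hzC : ∀ i, z i ∈ C := fun i => hBC (hzB (mem_range_self i))
  obtain ⟨j⟩ : Nonempty ι := by
    by_contra hι
    simp [not_nonempty_iff.1 hι] at hw1
  have hrest : ∑ i ∈ Finset.univ.erase j, w i • z i ∈ C :=
    Finset.sum_induction _ (· ∈ C) (fun v w hv hw => hadd v hv w hw) hzero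
      fun i _ => hsmul _ (hw0 i).le _ (hzC i)
  have hneg : -(w j • z j) = ∑ i ∈ Finset.univ.erase j, w i • z i := by
    rw [neg_eq_iff_add_eq_zero,
      Finset.add_sum_erase _ (fun i => w i • z i) (Finset.mem_univ j), hsum]
  have hwz : w j • z j = 0 := hsal _ (hsmul _ (hw0 j).le _ (hzC j)) (hneg ▸ hrest)
  rw [smul_eq_zero_iff_right (hw0 j).ne'] at hwz
  exact hB0 (hwz ▸ hzB (mem_range_self j))

variable [FiniteDimensional ℝ E]

/-- Separate `0` strictly from the convex hull of the unit vectors of `C`, which is compact and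
misses `0`. -/
theorem exists_forall_pos_of_salient (hC : IsClosed C) (hzero : (0 : E) ∈ C)
    (hadd : ∀ v ∈ C, ∀ w ∈ C, v + w ∈ C) (hsmul : ∀ c : ℝ, 0 ≤ c → ∀ v ∈ C, c • v ∈ C)
    (hsal : ∀ v ∈ C, -v ∈ C → v = 0) :
    ∃ f : StrongDual ℝ E, ∀ v ∈ C, v ≠ 0 → 0 < f v := by
  set B := C ∩ Metric.sphere 0 1
  have h0 : (0 : E) ∉ convexHull ℝ B :=
    zero_notMem_convexHull_of_salient hzero hadd hsmul hsal inter_subset_left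
      fun h => by simpa using h.2
  obtain ⟨f, u, hu, hfB⟩ := geometric_hahn_banach_point_closed (convex_convexHull ℝ B)
    ((isCompact_sphere 0 1).inter_left hC).convexHull.isClosed h0
  refine ⟨f, fun v hv hv0 => ?_⟩
  have hnorm : 0 < ‖v‖ := norm_pos_iff.2 hv0
  have hvB : ‖v‖⁻¹ • v ∈ B :=
    ⟨hsmul _ (inv_nonneg.2 hnorm.le) v hv, by simp [norm_smul, hnorm.ne']⟩
  have := hfB _ (subset_convexHull ℝ B hvB)
  rw [map_zero] at hu
  rw [map_smul, smul_eq_mul] at this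
  exact (mul_pos_iff_of_pos_left (inv_pos.2 hnorm)).1 (hu.trans this)

end SalientCone

theorem Submodule.finrank_inf_ker_add_one {K E : Type*} [DivisionRing K] [AddCommGroup E]
    [Module K E] {V : Submodule K E} [FiniteDimensional K V] {f : E →ₗ[K] K} {v : E}
    (hv : v ∈ V) (hfv : f v ≠ 0) :
    Module.finrank K ↥(V ⊓ LinearMap.ker f) + 1 = Module.finrank K V := by
  have hne : f ∘ₗ V.subtype ≠ 0 := fun h => hfv (LinearMap.congr_fun h ⟨v, hv⟩)
  rw [← Module.Dual.finrank_ker_add_one_of_ne_zero hne, LinearMap.ker_comp,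
    ← Submodule.map_comap_subtype, Submodule.finrank_map_subtype_eq]

section IntrinsicInterior

variable {E : Type*} [NormedAddCommGroup E] [NormedSpace ℝ E] {s : Set E} {z : E}

theorem eventually_add_smul_mem_of_mem_intrinsicInterior (hz : z ∈ intrinsicInterior ℝ s)
    {u : E} (hu : u ∈ vectorSpan ℝ s) : ∀ᶠ t : ℝ in 𝓝 0, z + t • u ∈ s := by
  obtain ⟨y, hy, rfl⟩ := hz
  rw [← direction_affineSpan] at hu
  let γ : ℝ → affineSpan ℝ s := fun t =>
    ⟨y + t • u, by simpa [vadd_eq_add, add_comm] using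
      AffineSubspace.vadd_mem_of_mem_direction (Submodule.smul_mem _ t hu) y.2⟩
  have hγ : Continuous γ := by fun_prop
  have hγ0 : γ 0 = y := Subtype.ext (by simp [γ])
  exact (hγ.tendsto' 0 y hγ0).eventually (isOpen_interior.mem_nhds hy) |>.mono
    fun t ht => (interior_subset ht : γ t ∈ ((↑) ⁻¹' s : Set (affineSpan ℝ s)))

theorem vectorSpan_hyperplane_inter_eq (hz : z ∈ intrinsicInterior ℝ s) (f : E →ₗ[ℝ] ℝ) :
    vectorSpan ℝ ({x | f x = f z} ∩ s) = vectorSpan ℝ s ⊓ LinearMap.ker f := by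
  apply le_antisymm
  · rw [vectorSpan_def, Submodule.span_le]
    rintro _ ⟨a, ha, b, hb, rfl⟩
    exact ⟨vsub_mem_vectorSpan ℝ ha.2 hb.2,
      by simp [show f a = f z from ha.1, show f b = f z from hb.1]⟩
  · rintro u ⟨huV, huf : f u = 0⟩
    obtain ⟨ε, hεu, hε⟩ := ((eventually_add_smul_mem_of_mem_intrinsicInterior hz huV).filter_mono
      nhdsWithin_le_nhds |>.and (self_mem_nhdsWithin (s := Ioi (0 : ℝ)))).exists
    have hmem : z + ε • u ∈ {x | f x = f z} ∩ s := ⟨by simp [huf], hεu⟩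
    have hzmem : z ∈ {x | f x = f z} ∩ s := ⟨rfl, intrinsicInterior_subset hz⟩
    have := Submodule.smul_mem _ ε⁻¹ (vsub_mem_vectorSpan ℝ hmem hzmem)
    rwa [vsub_eq_sub, add_sub_cancel_left, inv_smul_smul₀ hε.ne'] at this

end IntrinsicInterior

section AsymptoticCone

variable {E : Type*} [NormedAddCommGroup E] [NormedSpace ℝ E] {s : Set E}

theorem Convex.add_mem_asymptoticCone (hs : Convex ℝ s) {v w : E}
    (hv : v ∈ asymptoticCone ℝ s) (hw : w ∈ asymptoticCone ℝ s) :
    v + w ∈ asymptoticCone ℝ s := by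
  have hmid := hs.asymptoticCone hv hw (by norm_num : (0 : ℝ) ≤ 1 / 2)
    (by norm_num : (0 : ℝ) ≤ 1 / 2) (by norm_num)
  convert smul_mem_asymptoticCone (by norm_num : (0 : ℝ) ≤ 2) hmid using 1
  module

theorem asymptoticCone_subset_vectorSpan (hs : Convex ℝ s) (hsc : IsClosed s) :
    asymptoticCone ℝ s ⊆ vectorSpan ℝ s := by
  intro v hv
  obtain ⟨x, hx⟩ := asymptoticCone_nonempty.1 ⟨v, hv⟩
  have := hs.smul_vadd_mem_of_isClosed_of_mem_asymptoticCone hsc zero_le_one hv hx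
  simpa using vsub_mem_vectorSpan ℝ this hx

variable [FiniteDimensional ℝ E]

theorem isBounded_hyperplane_inter (hs : Convex ℝ s) (hsc : IsClosed s) {f : StrongDual ℝ E}
    (hf : ∀ v ∈ asymptoticCone ℝ s, v ≠ 0 → 0 < f v) (c : ℝ) :
    Bornology.IsBounded ({x | f x = c} ∩ s) := by
  rw [isBounded_iff_asymptoticCone_subset_singleton]
  intro v hv
  by_contra hv0
  obtain ⟨x, hx⟩ := asymptoticCone_nonempty.1 ⟨v, hv⟩
  have hS : IsClosed ({x | f x = c} ∩ s) := (isClosed_eq f.continuous continuous_const).inter hsc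
  have := ((convex_hyperplane f.isLinear c).inter hs)
    |>.smul_vadd_mem_of_isClosed_of_mem_asymptoticCone hS zero_le_one hv hx
  have hfv : f v = 0 := by
    have hfx : f x = c := hx.1
    have hfvx : f v + f x = c := by simpa using this.1
    linarith
  exact (hf v (asymptoticCone_mono inter_subset_right hv) hv0).ne' hfv

end AsymptoticCone

theorem eq_zero_of_mem_asymptoticCone_of_neg_mem {N : ℕ} {K : Set (EuclideanSpace ℝ (Fin N))}
    (hK : IsClosed K) (hconv : Convex ℝ K) (hline : ¬ ContainsLine K)
    {v : EuclideanSpace ℝ (Fin N)} (hv : v ∈ asymptoticCone ℝ K)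
    (hnv : -v ∈ asymptoticCone ℝ K) : v = 0 := by
  by_contra hv0
  obtain ⟨x, hx⟩ := asymptoticCone_nonempty.1 ⟨v, hv⟩
  refine hline ⟨x, v, hv0, fun t => ?_⟩
  rw [add_comm, ← vadd_eq_add]
  rcases le_total 0 t with ht | ht
  · exact hconv.smul_vadd_mem_of_isClosed_of_mem_asymptoticCone hK ht hv hx
  · simpa using hconv.smul_vadd_mem_of_isClosed_of_mem_asymptoticCone hK (neg_nonneg.2 ht) hnv hx

theorem exists_pos_on_asymptoticCone {N : ℕ} {K : Set (EuclideanSpace ℝ (Fin N))}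
    (hK : IsClosed K) (hconv : Convex ℝ K) (hline : ¬ ContainsLine K)
    (hV : vectorSpan ℝ K ≠ ⊥) :
    ∃ f : StrongDual ℝ (EuclideanSpace ℝ (Fin N)),
      (∀ v ∈ asymptoticCone ℝ K, v ≠ 0 → 0 < f v) ∧ ∃ v ∈ vectorSpan ℝ K, f v ≠ 0 := by
  have hKne : K.Nonempty := nonempty_iff_ne_empty.2 fun h => hV (by simp [h])
  obtain ⟨g, hg⟩ := exists_forall_pos_of_salient isClosed_asymptoticCone
    (zero_mem_asymptoticCone.2 hKne) (fun v hv w hw => hconv.add_mem_asymptoticCone hv hw)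
    (fun c hc v hv => smul_mem_asymptoticCone hc hv)
    (fun v hv hnv => eq_zero_of_mem_asymptoticCone_of_neg_mem hK hconv hline hv hnv)
  by_cases hC : ∃ v ∈ asymptoticCone ℝ K, v ≠ 0
  · obtain ⟨v, hv, hv0⟩ := hC
    exact ⟨g, hg, v, asymptoticCone_subset_vectorSpan hconv hK hv, (hg v hv hv0).ne'⟩
  · push Not at hC
    obtain ⟨v, hvV, hv0⟩ := Submodule.exists_mem_ne_zero_of_ne_bot hV
    obtain ⟨f, hf⟩ := SeparatingDual.exists_ne_zero (R := ℝ) hv0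
    exact ⟨f, fun v hv hv0 => absurd (hC v hv) hv0, v, hvV, hf⟩

/-- If `K ⊆ ℝ^N` is a closed convex set containing no line and with `dim K ≥ 1` (dimension of the
affine hull, i.e. rank of the vector span), then there is an affine hyperplane `H` such that
`H ∩ K` is compact of dimension `dim K - 1`. -/
theorem stmt_1 {N : ℕ} (K : Set (EuclideanSpace ℝ (Fin N)))
    (hK : IsClosed K) (hconv : Convex ℝ K) (hline : ¬ ContainsLine K)
    (hdim : 1 ≤ Module.finrank ℝ (vectorSpan ℝ K)) :
    ∃ (f : EuclideanSpace ℝ (Fin N) →ₗ[ℝ] ℝ) (c : ℝ), f ≠ 0 ∧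
      IsCompact ({x | f x = c} ∩ K) ∧
      Module.finrank ℝ (vectorSpan ℝ ({x | f x = c} ∩ K)) =
        Module.finrank ℝ (vectorSpan ℝ K) - 1 := by
  have hV : vectorSpan ℝ K ≠ ⊥ := Submodule.one_le_finrank_iff.1 hdim
  have hKne : K.Nonempty := nonempty_iff_ne_empty.2 fun h => hV (by simp [h])
  obtain ⟨f, hf, v, hvV, hfv⟩ := exists_pos_on_asymptoticCone hK hconv hline hV
  obtain ⟨z, hz⟩ := hKne.intrinsicInterior hconv
  refine ⟨f, (f : EuclideanSpace ℝ (Fin N) →ₗ[ℝ] ℝ) z,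
    fun h => hfv (LinearMap.congr_fun h v), ?_, ?_⟩
  · exact Metric.isCompact_of_isClosed_isBounded
      ((isClosed_eq f.continuous continuous_const).inter hK)
      (isBounded_hyperplane_inter hconv hK hf _)
  · rw [vectorSpan_hyperplane_inter_eq hz, ← Submodule.finrank_inf_ker_add_one hvV hfv]
    rfl
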